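/- arXiv:1311.2928 — 4 statements merged into one kernel-verified Lean document; each statement's English description precedes it below -/
import Mathlib

section
/- For a nondeterministic generalised Büchi automaton B with state set Q, initial states I, transitions T, and accepting sets F_1,...,F_k, define the subset automaton S^o with states 2^Q, initial state {I}, transitions (R, σ, T(R,σ)) for nonempty R, and accepting sets F^o_i = {(R,σ,C) : there exist q ∈ R, q' ∈ C with (q,σ,q') ∈ F_i}. Then the language of B is contained in the language of S^o. -/
open Set

variable {σ Q : Type*}

/-- Successor states of a set `R` under letter `a` w.r.t. transition relation `T`. -/
def TSet (T : Set (Q × σ × Q)) (R : Set Q) (a : σ) : Set Q := {q' | ∃ q ∈ R, (q, a, q') ∈ T}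

/-- A run of an automaton with transitions `T` and initial states `I` on the word `α`. -/
def IsRun (T : Set (Q × σ × Q)) (I : Set Q) (α : ℕ → σ) (ρ : ℕ → Q) : Prop :=
  ρ 0 ∈ I ∧ ∀ i, (ρ i, α i, ρ (i + 1)) ∈ T

/-- `p` holds infinitely often. -/
def InfOften (p : ℕ → Prop) : Prop := ∀ n, ∃ m, n ≤ m ∧ p m

/-- Language of the NGBA `(Σ, Q, I, T, {F_1,...,F_k})`. -/
def GBALang (T : Set (Q × σ × Q)) (I : Set Q) {k : ℕ} (F : Fin k → Set (Q × σ × Q)) :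
    Set (ℕ → σ) :=
  {α | ∃ ρ : ℕ → Q, IsRun T I α ρ ∧
        ∀ j : Fin k, InfOften fun i => (ρ i, α i, ρ (i + 1)) ∈ F j}

/-- The (deterministic) run of the subset automaton: `R ↦ T(R, σ)`. -/
def subsetRun (T : Set (Q × σ × Q)) (I : Set Q) (α : ℕ → σ) : ℕ → Set Q
  | 0 => I
  | n + 1 => TSet T (subsetRun T I α n) (α n)

/-- Language of the over-approximating subset automaton `S^o`: the unique subset run must stay
nonempty, and for every `i`, infinitely often a transition containing some underlying
`F i`-transition must occur. -/
def SoLang (T : Set (Q × σ × Q)) (I : Set Q) {k : ℕ} (F : Fin k → Set (Q × σ × Q)) :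
    Set (ℕ → σ) :=
  {α | (∀ n, subsetRun T I α n ≠ ∅) ∧
      ∀ j : Fin k, InfOften fun n =>
        ∃ q ∈ subsetRun T I α n, ∃ q' ∈ subsetRun T I α (n + 1), (q, α n, q') ∈ F j}

theorem InfOften.mono {p q : ℕ → Prop} (hp : InfOften p) (hpq : ∀ n, p n → q n) :
    InfOften q := fun n =>
  let ⟨m, hnm, hm⟩ := hp n
  ⟨m, hnm, hpq m hm⟩

theorem IsRun.mem_subsetRun {T : Set (Q × σ × Q)} {I : Set Q} {α : ℕ → σ} {ρ : ℕ → Q}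
    (hρ : IsRun T I α ρ) : ∀ n, ρ n ∈ subsetRun T I α n
  | 0 => hρ.1
  | n + 1 => ⟨ρ n, hρ.mem_subsetRun n, hρ.2 n⟩

theorem ngba_lang_subset_subset_over_lang_general (T : Set (Q × σ × Q)) (I : Set Q) {k : ℕ}
    (F : Fin k → Set (Q × σ × Q)) :
    GBALang T I F ⊆ SoLang T I F := by
  rintro α ⟨ρ, hρ, hacc⟩
  refine ⟨fun n => (Set.nonempty_of_mem (hρ.mem_subsetRun n)).ne_empty, fun j => ?_⟩
  exact (hacc j).mono fun m hm =>
    ⟨ρ m, hρ.mem_subsetRun m, ρ (m + 1), hρ.mem_subsetRun (m + 1), hm⟩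

/-- the language of the NGBA `B` is contained in the language of `S^o`. -/
theorem ngba_lang_subset_subset_over_lang (T : Set (Q × σ × Q)) (I : Set Q) {k : ℕ}
    (F : Fin k → Set (Q × σ × Q)) (hI : I.Nonempty) (hF : ∀ j, F j ⊆ T) :
    GBALang T I F ⊆ SoLang T I F :=
  ngba_lang_subset_subset_over_lang_general T I F
end

section
/- Let G be a finite directed graph and let ~ be an equivalence relation on its vertices such that (1) u → v implies [u] → [v] in the quotient graph, and (2) if [u] → [v'] in the quotient and u is reachable from an initial vertex, then there exists v with [v] = [v'] and u → v. Then: if S is a bottom SCC of G (restricted to reachable vertices), then [S] is a bottom SCC of the quotient graph; and conversely, if S' is a bottom SCC of the quotient graph, then there exists a bottom SCC S of G with [S] = S'. -/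
open Set

variable {V W : Type*}

/-- `S` is a bottom strongly connected component of the graph with edge relation `E`:
nonempty, strongly connected, and closed under successors. -/
def IsBSCC (E : V → V → Prop) (S : Set V) : Prop :=
  S.Nonempty ∧ (∀ u ∈ S, ∀ v ∈ S, Relation.ReflTransGen E u v) ∧
    ∀ u ∈ S, ∀ v, E u v → v ∈ S

/-- Reachability from a set `I` of initial vertices. -/
def ReachFrom (E : V → V → Prop) (I : Set V) (u : V) : Prop :=
  ∃ i ∈ I, Relation.ReflTransGen E i u

/-!
Edges project to the quotient, and quotient edges lift from reachable vertices, so paths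
project and lift as well: the image of a bottom SCC of `G` is therefore strongly connected and
closed. Conversely, lift a path from an initial class into `S'`, then descend (by finiteness)
to a bottom SCC of `G`; its image stays in `S'` because `S'` is closed, and exhausts `S'` because
paths out of its image lift back into it.
-/

open Relation

namespace IsBSCC

variable {E : V → V → Prop} {S : Set V}

theorem mem_of_reflTransGen (hS : IsBSCC E S) {u v : V} (hu : u ∈ S)
    (huv : ReflTransGen E u v) : v ∈ S := by
  induction huv with
  | refl => exact hu
  | tail _ hvw ih => exact hS.2.2 _ ih _ hvw

theorem image {H : W → W → Prop} {c : V → W} (hS : IsBSCC E S)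
    (hproj : ∀ u v, E u v → H (c u) (c v))
    (hlift : ∀ u ∈ S, ∀ w, H (c u) w → ∃ v, c v = w ∧ E u v) :
    IsBSCC H (c '' S) := by
  obtain ⟨hne, hconn, hclosed⟩ := hS
  refine ⟨hne.image c, ?_, ?_⟩
  · rintro _ ⟨u, hu, rfl⟩ _ ⟨v, hv, rfl⟩
    exact ReflTransGen.lift c hproj u v (hconn u hu v hv)
  · rintro _ ⟨u, hu, rfl⟩ w hw
    obtain ⟨v, rfl, huv⟩ := hlift u hu w hw
    exact ⟨v, hclosed u hu v huv, rfl⟩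

end IsBSCC

theorem isBSCC_setOf_reflTransGen {E : V → V → Prop} {m : V}
    (hm : ∀ x, ReflTransGen E m x → ReflTransGen E x m) :
    IsBSCC E {x | ReflTransGen E m x} :=
  ⟨⟨m, .refl⟩, fun u hu _ hv => (hm u hu).trans hv, fun _ hu _ huv => hu.tail huv⟩

theorem exists_reflTransGen_isBSCC [Finite V] (E : V → V → Prop) (u : V) :
    ∃ m, ReflTransGen E u m ∧ IsBSCC E {x | ReflTransGen E m x} := by
  let below : V → V → Prop := fun x y => ReflTransGen E y x ∧ ¬ ReflTransGen E x y
  have : IsTrans V below :=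
    ⟨fun _ _ _ ⟨hba, hnab⟩ ⟨hcb, _⟩ => ⟨hcb.trans hba, fun hac => hnab (hac.trans hcb)⟩⟩
  have : Std.Irrefl below := ⟨fun _ h => h.2 h.1⟩
  induction u using (Finite.wellFounded_of_trans_of_irrefl below).induction with
  | _ u ih =>
    by_cases hbottom : ∀ x, ReflTransGen E u x → ReflTransGen E x u
    · exact ⟨u, .refl, isBSCC_setOf_reflTransGen hbottom⟩
    · push Not at hbottom
      obtain ⟨x, hux, hxu⟩ := hbottom
      obtain ⟨m, hxm, hm⟩ := ih x ⟨hux, hxu⟩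
      exact ⟨m, hux.trans hxm, hm⟩

theorem ReachFrom.trans {E : V → V → Prop} {I : Set V} {u v : V} (hu : ReachFrom E I u)
    (huv : ReflTransGen E u v) : ReachFrom E I v :=
  let ⟨i, hi, hiu⟩ := hu
  ⟨i, hi, hiu.trans huv⟩

theorem exists_reflTransGen_lift {E : V → V → Prop} {H : W → W → Prop}
    {c : V → W} {I : Set V}
    (hlift : ∀ u w, ReachFrom E I u → H (c u) w → ∃ v, c v = w ∧ E u v)
    {u : V} {w : W} (hu : ReachFrom E I u) (huw : ReflTransGen H (c u) w) :
    ∃ v, c v = w ∧ ReflTransGen E u v := by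
  induction huw with
  | refl => exact ⟨u, rfl, .refl⟩
  | tail _ hw ih =>
    obtain ⟨v, rfl, huv⟩ := ih
    obtain ⟨v', rfl, hvv'⟩ := hlift v _ (hu.trans huv) hw
    exact ⟨v', rfl, huv.tail hvv'⟩

theorem image_setOf_reflTransGen_eq {E : V → V → Prop} {H : W → W → Prop} {c : V → W}
    {S' : Set W} (hS' : IsBSCC H S') (hproj : ∀ u v, E u v → H (c u) (c v)) {m : V}
    (hm : c m ∈ S') (hlift : ∀ w, ReflTransGen H (c m) w → ∃ v, c v = w ∧ ReflTransGen E m v) :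
    c '' {x | ReflTransGen E m x} = S' := by
  refine Subset.antisymm ?_ fun w hw => ?_
  · rintro _ ⟨x, hx, rfl⟩
    exact hS'.mem_of_reflTransGen hm (ReflTransGen.lift c hproj m x hx)
  · obtain ⟨v, rfl, hmv⟩ := hlift w (hS'.2.1 _ hm w hw)
    exact ⟨v, hmv, rfl⟩

/-- correspondence of bottom SCCs under a quotient map.  `E` is the edge
relation of `G` on `V`, `H` the edge relation of the quotient graph on `W`, `c` the
quotient map and `I` the initial vertices.  Hypothesis (1): edges project to quotient edges;
hypothesis (2): quotient edges from (classes of) reachable vertices can be lifted.  Then the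
image of a bottom SCC of `G` consisting of reachable vertices is a bottom SCC of the
quotient graph, and every bottom SCC of the quotient graph consisting of reachable classes
is the image of a bottom SCC of `G`. -/
theorem bscc_quotient_correspondence [Finite V]
    (E : V → V → Prop) (H : W → W → Prop) (c : V → W) (I : Set V)
    (h1 : ∀ u v, E u v → H (c u) (c v))
    (h2 : ∀ u w, ReachFrom E I u → H (c u) w → ∃ v, c v = w ∧ E u v) :
    (∀ S : Set V, IsBSCC E S → S ⊆ {u | ReachFrom E I u} → IsBSCC H (c '' S)) ∧
    (∀ S' : Set W, IsBSCC H S' → S' ⊆ {w | ∃ i ∈ I, Relation.ReflTransGen H (c i) w} →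
      ∃ S : Set V, IsBSCC E S ∧ c '' S = S') := by
  refine ⟨fun S hS hreach => hS.image h1 fun u hu w => h2 u w (hreach hu), ?_⟩
  rintro S' hS' hreach'
  obtain ⟨w₀, hw₀⟩ := hS'.1
  obtain ⟨i, hi, hiw₀⟩ := hreach' hw₀
  have hi_reach : ReachFrom E I i := ⟨i, hi, .refl⟩
  obtain ⟨u₀, rfl, hiu₀⟩ := exists_reflTransGen_lift h2 hi_reach hiw₀
  obtain ⟨m, hu₀m, hm⟩ := exists_reflTransGen_isBSCC E u₀
  have hm_mem : c m ∈ S' := hS'.mem_of_reflTransGen hw₀ (ReflTransGen.lift c h1 u₀ m hu₀m)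
  have hm_reach : ReachFrom E I m := hi_reach.trans (hiu₀.trans hu₀m)
  exact ⟨_, hm, image_setOf_reflTransGen_eq hS' h1 hm_mem fun w hw =>
    exists_reflTransGen_lift h2 hm_reach hw⟩
end

section
/- Let SD be a semi-deterministic Büchi automaton with initial state set a singleton, states partitioned into initial states Q_i and final states Q_f, transitions partitioned into initial transitions (a partial function on Q_i × Σ), transit transitions from Q_i to Q_f, and final transitions (a partial function on Q_f × Σ), and accepting transitions all within the final part. Then every accepting run of SD takes exactly one transit transition, and after that transition the remainder of the run is uniquely determined by the word. -/
variable {σ Qi Qf : Type*}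

/-- The transition relation of a semi-deterministic Büchi automaton: initial transitions are
a partial function `Ti` on the initial part `Qi`, transit transitions `Tt` go from `Qi` to
the final part `Qf`, and final transitions are a partial function `Tf` on `Qf`. -/
def SDStep (Ti : Qi → σ → Option Qi) (Tt : Set (Qi × σ × Qf)) (Tf : Qf → σ → Option Qf)
    (s : Qi ⊕ Qf) (a : σ) (s' : Qi ⊕ Qf) : Prop :=
  match s, s' with
  | Sum.inl q, Sum.inl q' => Ti q a = some q'
  | Sum.inl q, Sum.inr q' => (q, a, q') ∈ Tt
  | Sum.inr q, Sum.inr q' => Tf q a = some q'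
  | Sum.inr _, Sum.inl _ => False

/-- `ρ` is a run of the semi-deterministic automaton on `α`. -/
def IsSDRun (Ti : Qi → σ → Option Qi) (Tt : Set (Qi × σ × Qf)) (Tf : Qf → σ → Option Qf)
    (α : ℕ → σ) (ρ : ℕ → Qi ⊕ Qf) : Prop :=
  ∀ n, SDStep Ti Tt Tf (ρ n) (α n) (ρ (n + 1))

/-- The transition taken at position `n` of the run `ρ` is a transit transition. -/
def IsTransitAt (ρ : ℕ → Qi ⊕ Qf) (n : ℕ) : Prop :=
  (∃ q, ρ n = Sum.inl q) ∧ ∃ q', ρ (n + 1) = Sum.inr q'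

/-!
No transition leaves the final part, so along a run "being in `Qf`" is an upward
closed property of the position. A run that starts in `Qi` and visits `Qf` at all (as an accepting
run must) therefore enters `Qf` at exactly one step, and that step is the transit transition.
The final part is deterministic, so two runs on the same word that meet in `Qf` agree from then on.
-/

theorem Nat.existsUnique_not_and_succ_of_monotone {P : ℕ → Prop} (hP : Monotone P) (h0 : ¬P 0)
    (h : ∃ n, P n) : ∃! n, ¬P n ∧ P (n + 1) := by
  classical
  have hjump : ∀ n, ¬P n ∧ P (n + 1) ↔ n + 1 = Nat.find h := fun n => by
    rw [eq_comm, Nat.find_eq_iff]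
    exact and_comm.trans (and_congr_right fun _ =>
      ⟨fun hn k hk hPk => hn (hP (Nat.lt_succ_iff.mp hk) hPk), fun hlt => hlt n n.lt_succ_self⟩)
  obtain ⟨k, hk⟩ := Nat.exists_eq_succ_of_ne_zero fun hz => h0 (hz ▸ Nat.find_spec h)
  exact ⟨k, (hjump k).2 hk.symm, fun m hm => Nat.succ_injective (((hjump m).1 hm).trans hk)⟩

section SemiDeterministic

variable {Ti : Qi → σ → Option Qi} {Tt : Set (Qi × σ × Qf)} {Tf : Qf → σ → Option Qf}

theorem SDStep.isRight {s s' : Qi ⊕ Qf} {a : σ} (h : SDStep Ti Tt Tf s a s')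
    (hs : s.isRight) : s'.isRight := by
  cases s <;> cases s' <;> simp_all [SDStep]

theorem SDStep.eq_of_inr {q : Qf} {a : σ} {s₁ s₂ : Qi ⊕ Qf} (h₁ : SDStep Ti Tt Tf (.inr q) a s₁)
    (h₂ : SDStep Ti Tt Tf (.inr q) a s₂) : s₁ = s₂ := by
  cases s₁ <;> cases s₂ <;> simp_all [SDStep]

variable {α : ℕ → σ} {ρ : ℕ → Qi ⊕ Qf}

theorem IsSDRun.monotone_isRight (hρ : IsSDRun Ti Tt Tf α ρ) :
    Monotone fun n => (ρ n).isRight :=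
  monotone_nat_of_le_succ fun n => (hρ n).isRight

theorem IsSDRun.eq_of_le_of_eq_inr {ρ' : ℕ → Qi ⊕ Qf} (hρ : IsSDRun Ti Tt Tf α ρ)
    (hρ' : IsSDRun Ti Tt Tf α ρ') {n : ℕ} {q : Qf} (h : ρ n = .inr q) (h' : ρ' n = .inr q)
    {m : ℕ} (hnm : n ≤ m) : ρ' m = ρ m := by
  induction m, hnm using Nat.le_induction with
  | base => rw [h, h']
  | succ k hnk ih =>
    obtain ⟨r, hr⟩ := Sum.isRight_iff.mp (hρ.monotone_isRight hnk (by simp [h]))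
    exact SDStep.eq_of_inr (hr ▸ ih ▸ hρ' k) (hr ▸ hρ k)

theorem isTransitAt_iff {n : ℕ} :
    IsTransitAt ρ n ↔ ¬(ρ n).isRight ∧ (ρ (n + 1)).isRight := by
  rw [IsTransitAt, Sum.not_isRight, Sum.isLeft_iff, Sum.isRight_iff]

end SemiDeterministic

theorem sd_run_unique_transit_general (Ti : Qi → σ → Option Qi) (Tt : Set (Qi × σ × Qf))
    (Tf : Qf → σ → Option Qf) (F : Set (Qf × σ × Qf))
    (α : ℕ → σ) (ρ : ℕ → Qi ⊕ Qf) (hrun : IsSDRun Ti Tt Tf α ρ)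
    (h0 : ∃ q0, ρ 0 = Sum.inl q0)
    (hacc : InfOften fun n =>
      ∃ q q', ρ n = Sum.inr q ∧ ρ (n + 1) = Sum.inr q' ∧ (q, α n, q') ∈ F) :
    (∃! n, IsTransitAt ρ n) ∧
      ∀ ρ' : ℕ → Qi ⊕ Qf, IsSDRun Ti Tt Tf α ρ' →
        ∀ n q, ρ n = Sum.inr q → ρ' n = Sum.inr q → ∀ m, n ≤ m → ρ' m = ρ m := by
  refine ⟨?_, fun ρ' hrun' n q hq hq' m hnm => hrun.eq_of_le_of_eq_inr hrun' hq hq' hnm⟩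
  obtain ⟨q0, hq0⟩ := h0
  obtain ⟨m, -, q, -, hq, -⟩ := hacc 0
  simpa only [isTransitAt_iff] using
    Nat.existsUnique_not_and_succ_of_monotone hrun.monotone_isRight (by simp [hq0])
      ⟨m, by simp [hq]⟩

/-- every accepting run of a semi-deterministic Büchi automaton (with
accepting transitions inside the final part) starting in the initial part takes exactly one
transit transition, and after that transition the remainder of the run is uniquely
determined by the word. -/
theorem sd_run_unique_transit (Ti : Qi → σ → Option Qi) (Tt : Set (Qi × σ × Qf))
    (Tf : Qf → σ → Option Qf) (F : Set (Qf × σ × Qf))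
    (hF : ∀ t ∈ F, Tf t.1 t.2.1 = some t.2.2)
    (α : ℕ → σ) (ρ : ℕ → Qi ⊕ Qf) (hrun : IsSDRun Ti Tt Tf α ρ)
    (h0 : ∃ q0, ρ 0 = Sum.inl q0)
    (hacc : InfOften fun n =>
      ∃ q q', ρ n = Sum.inr q ∧ ρ (n + 1) = Sum.inr q' ∧ (q, α n, q') ∈ F) :
    (∃! n, IsTransitAt ρ n) ∧
      ∀ ρ' : ℕ → Qi ⊕ Qf, IsSDRun Ti Tt Tf α ρ' →
        ∀ n q, ρ n = Sum.inr q → ρ' n = Sum.inr q → ∀ m, n ≤ m → ρ' m = ρ m :=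
  sd_run_unique_transit_general Ti Tt Tf F α ρ hrun h0 hacc
end

section
/- Let B be an NGBA and let ρ be an accepting run of B on a word α. Define width(ρ, α) = lim_{n→∞} width(ρ, n, α) and, for each accepting-set index h, width_h(ρ, α) analogously using the sets C^h_j of states reachable at position j from ρ(n) after having passed through an F_h transition after position n. Then width_h(ρ, α) = width(ρ, α) for every h ∈ {1,...,k}. -/
open Set

variable {σ Q : Type*}

/-- `R_j`: the set of states reachable at position `j` by runs on `α` agreeing with `ρ`
up to position `n`. -/
def Rset (T : Set (Q × σ × Q)) (I : Set Q) (α : ℕ → σ) (ρ : ℕ → Q) (n j : ℕ) : Set Q :=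
  {q | ∃ ρ' : ℕ → Q, IsRun T I α ρ' ∧ (∀ i ≤ n, ρ' i = ρ i) ∧ ρ' j = q}

/-- `C^h_j`: the subset of `R_j` of states reachable at position `j` by runs agreeing with
`ρ` up to position `n` that take at least one transition of `F_h` strictly after position
`n` (i.e. at some position `l` with `n ≤ l < j`). -/
def CsetH (T : Set (Q × σ × Q)) (I : Set Q) (α : ℕ → σ) (ρ : ℕ → Q)
    (Fh : Set (Q × σ × Q)) (n j : ℕ) : Set Q :=
  {q | ∃ ρ' : ℕ → Q, IsRun T I α ρ' ∧ (∀ i ≤ n, ρ' i = ρ i) ∧ ρ' j = q ∧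
      ∃ l, n ≤ l ∧ l < j ∧ (ρ' l, α l, ρ' (l + 1)) ∈ Fh}

/-- `width(ρ, n, α)`. -/
noncomputable def width (T : Set (Q × σ × Q)) (I : Set Q) (α : ℕ → σ) (ρ : ℕ → Q)
    (n : ℕ) : ℕ :=
  sSup {c | ∃ j, n ≤ j ∧ c = (Rset T I α ρ n j).ncard}

/-- `width_h(ρ, n, α)`. -/
noncomputable def widthH (T : Set (Q × σ × Q)) (I : Set Q) (α : ℕ → σ) (ρ : ℕ → Q)
    (Fh : Set (Q × σ × Q)) (n : ℕ) : ℕ :=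
  sSup {c | ∃ j, n ≤ j ∧ c = (CsetH T I α ρ Fh n j).ncard}

/-! Since `ρ` takes an `F_h` transition at some position `m ≥ n`, every run agreeing with `ρ`
up to `m + 1` takes it too, so `R_j ⊆ C^h_j` for `j > m` (with `R_j` taken from `m + 1` and
`C^h_j` from `n`). Hence `width (m + 1) ≤ width_h n ≤ width n`, and the infima coincide. -/

theorem sSup_ncard_le_sSup_ncard [Finite Q] {A B : ℕ → Set Q} {a b : ℕ} (hba : b ≤ a)
    (hAB : ∀ j, a ≤ j → A j ⊆ B j) :
    sSup {c | ∃ j, a ≤ j ∧ c = (A j).ncard} ≤ sSup {c | ∃ j, b ≤ j ∧ c = (B j).ncard} := by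
  have hbdd : BddAbove {c | ∃ j, b ≤ j ∧ c = (B j).ncard} :=
    ⟨Nat.card Q, fun _ ⟨j, _, hc⟩ => hc ▸ ncard_le_card _⟩
  refine csSup_le ⟨_, a, le_rfl, rfl⟩ ?_
  rintro _ ⟨j, hj, rfl⟩
  exact le_csSup_of_le hbdd ⟨j, hba.trans hj, rfl⟩ (ncard_le_ncard (hAB j hj))

section

variable (T : Set (Q × σ × Q)) (I : Set Q) (α : ℕ → σ) (ρ : ℕ → Q) (Fh : Set (Q × σ × Q))

theorem CsetH_subset_Rset (n j : ℕ) : CsetH T I α ρ Fh n j ⊆ Rset T I α ρ n j :=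
  fun _ ⟨ρ', hrun, hagree, hj, _⟩ => ⟨ρ', hrun, hagree, hj⟩

theorem Rset_succ_subset_CsetH {n m j : ℕ} (hnm : n ≤ m) (hmj : m < j)
    (hm : (ρ m, α m, ρ (m + 1)) ∈ Fh) : Rset T I α ρ (m + 1) j ⊆ CsetH T I α ρ Fh n j := by
  rintro q ⟨ρ', hrun, hagree, hj⟩
  refine ⟨ρ', hrun, fun i hi => hagree i (by omega), hj, m, hnm, hmj, ?_⟩
  rwa [hagree m m.le_succ, hagree (m + 1) le_rfl]

theorem widthH_le_width [Finite Q] (n : ℕ) : widthH T I α ρ Fh n ≤ width T I α ρ n :=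
  sSup_ncard_le_sSup_ncard le_rfl fun j _ => CsetH_subset_Rset T I α ρ Fh n j

theorem width_succ_le_widthH [Finite Q] {n m : ℕ} (hnm : n ≤ m)
    (hm : (ρ m, α m, ρ (m + 1)) ∈ Fh) : width T I α ρ (m + 1) ≤ widthH T I α ρ Fh n :=
  sSup_ncard_le_sSup_ncard (by omega) fun _ hj => Rset_succ_subset_CsetH T I α ρ Fh hnm hj hm

end

theorem widthH_limit_eq_width_limit_general [Finite Q] {k : ℕ} (T : Set (Q × σ × Q)) (I : Set Q)
    (F : Fin k → Set (Q × σ × Q)) (α : ℕ → σ) (ρ : ℕ → Q)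
    (hacc : ∀ j : Fin k, InfOften fun i => (ρ i, α i, ρ (i + 1)) ∈ F j) (h : Fin k) :
    sInf (Set.range (widthH T I α ρ (F h))) = sInf (Set.range (width T I α ρ)) := by
  apply le_antisymm
  · exact ciInf_mono_of_forall_exists (OrderBot.bddBelow _)
      fun n => ⟨n, widthH_le_width T I α ρ (F h) n⟩
  · refine ciInf_mono_of_forall_exists (OrderBot.bddBelow _) fun n => ?_
    obtain ⟨m, hnm, hm⟩ := hacc h n
    exact ⟨m + 1, width_succ_le_widthH T I α ρ (F h) hnm hm⟩

/-- for an accepting run `ρ` of the NGBA on `α`, the limit of `width_h` equals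
the limit of `width` for every accepting-set index `h` (the limits of the non-increasing
sequences are their infima). -/
theorem widthH_limit_eq_width_limit [Finite Q] {k : ℕ} (T : Set (Q × σ × Q)) (I : Set Q)
    (F : Fin k → Set (Q × σ × Q)) (hF : ∀ j, F j ⊆ T) (α : ℕ → σ) (ρ : ℕ → Q)
    (hρ : IsRun T I α ρ)
    (hacc : ∀ j : Fin k, InfOften fun i => (ρ i, α i, ρ (i + 1)) ∈ F j) (h : Fin k) :
    sInf (Set.range (widthH T I α ρ (F h))) = sInf (Set.range (width T I α ρ)) :=
  widthH_limit_eq_width_limit_general T I F α ρ hacc h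
end
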